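/- For all nonnegative integers k, l, m with l ≥ k, the uniform lower bound |ω_{k,l} − ω_{k,m}| ≥ π|l−m|/(2√2) holds. -/

import Mathlib

/-!
Rationalising, `|√a - √b| (√a + √b) = |a - b|`, and for `a = k² + l²`, `b = k² + m²` one has
`a - b = (l - m)(l + m)`. Since `k ≤ l`, both square roots are at most `√2 (l + m)`, so cancelling
`l + m` leaves `|l - m| ≤ 2√2 |√a - √b|`.
-/

/-- Eigenfrequencies of the Neumann Laplacian on the unit square. -/
noncomputable def ω (k l : ℕ) : ℝ := Real.pi * Real.sqrt ((k : ℝ)^2 + (l : ℝ)^2)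

open Real

lemma abs_sub_le_mul_abs_sqrt_sub {a b s : ℝ} (ha : 0 ≤ a) (hb : 0 ≤ b) (hs : √a + √b ≤ s) :
    |a - b| ≤ s * |√a - √b| := calc
  |a - b| = |(√a + √b) * (√a - √b)| := by rw [← sq_sub_sq, sq_sqrt ha, sq_sqrt hb]
  _ = (√a + √b) * |√a - √b| := by rw [abs_mul, abs_of_nonneg (by positivity)]
  _ ≤ s * |√a - √b| := by gcongr

lemma sqrt_le_sqrt_two_mul {x y : ℝ} (hy : 0 ≤ y) (hx : x ≤ 2 * y ^ 2) : √x ≤ √2 * y := by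
  rwa [sqrt_le_left (by positivity), mul_pow, sq_sqrt zero_le_two]

lemma abs_sub_le_two_sqrt_two_mul_abs_sqrt_sub {k l m : ℝ} (hk : 0 ≤ k) (hkl : k ≤ l) (hm : 0 ≤ m) :
    |l - m| ≤ 2 * √2 * |√(k ^ 2 + l ^ 2) - √(k ^ 2 + m ^ 2)| := by
  rcases (add_nonneg (hk.trans hkl) hm).eq_or_lt with hlm | hlm
  · obtain ⟨rfl, rfl⟩ : l = 0 ∧ m = 0 := ⟨by linarith, by linarith⟩
    simp
  have hbound : √(k ^ 2 + l ^ 2) + √(k ^ 2 + m ^ 2) ≤ 2 * √2 * (l + m) := by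
    have h₁ : √(k ^ 2 + l ^ 2) ≤ √2 * (l + m) := sqrt_le_sqrt_two_mul hlm.le (by nlinarith)
    have h₂ : √(k ^ 2 + m ^ 2) ≤ √2 * (l + m) := sqrt_le_sqrt_two_mul hlm.le (by nlinarith)
    linarith
  have key := abs_sub_le_mul_abs_sqrt_sub (by positivity) (by positivity) hbound
  rw [add_sub_add_left_eq_sub, sq_sub_sq, abs_mul, abs_of_pos hlm, mul_comm (2 * √2),
    mul_assoc] at key
  exact le_of_mul_le_mul_left key hlm

theorem stmt_2 (k l m : ℕ) (hlk : l ≥ k) :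
    |ω k l - ω k m| ≥ Real.pi * |(l : ℝ) - (m : ℝ)| / (2 * Real.sqrt 2) := by
  have hbound := abs_sub_le_two_sqrt_two_mul_abs_sqrt_sub (k.cast_nonneg' (α := ℝ))
    (Nat.cast_le.mpr hlk) (m.cast_nonneg' (α := ℝ))
  rw [ω, ω, ← mul_sub, abs_mul, abs_of_pos pi_pos, ge_iff_le, div_le_iff₀ (by positivity),
    mul_assoc, mul_comm _ (2 * √2)]
  gcongr
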